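/- In any rooted tree T, the restoration value is strictly decreasing along edges away from the root: if u is the parent of w in T, then R_T(w) < R_T(u). Consequently the root has the strictly largest restoration value, and hence the largest winning probability in Pass the Buck. -/

import Mathlib

/-- A rooted tree: a root with a finite list of subtrees. -/
inductive RTree where
  | node : List RTree → RTree

/-- Restoration number and period of a rooted tree, by mutual recursion:
`RP (leaf) = (1, 2)`; for a root with subtrees `ts`,
`R = lcm of the periods of the subtrees` and
`P = (m+2)·R − Σᵢ (R / P(Tᵢ))·R(Tᵢ)`. -/
def RTree.RP : RTree → ℕ × ℕ
  | .node [] => (1, 2)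
  | .node ts@(_ :: _) =>
      let rps := ts.attach.map (fun t => RTree.RP t.1)
      let r := (rps.map Prod.snd).foldr Nat.lcm 1
      (r, (ts.length + 2) * r - (rps.map (fun q => r / q.2 * q.1)).sum)
  decreasing_by
    cases t with
    | mk t ht =>
      have := List.sizeOf_lt_of_mem ht
      simp_all; omega

/-- Restoration number of a rooted tree. -/
def RTree.R (t : RTree) : ℕ := t.RP.1

/-- Period of a rooted tree. -/
def RTree.P (t : RTree) : ℕ := t.RP.2

/-- Vertices are addressed by paths from the root (lists of child indices).
`restAt T w` is the restoration value `R_T(w)` of the vertex `w` in `T`: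
`R_T(root) = R(T)` and for `w` in the `k`-th subtree `T_k`,
`R_T(k :: w) = (R(T)/P(T_k)) · R_{T_k}(w)`. (Value `0` for invalid addresses.) -/
def RTree.restAt : RTree → List ℕ → ℕ
  | t, [] => t.R
  | .node ts, k :: rest =>
      match h : ts[k]? with
      | some tk => (RTree.node ts).R / tk.P * tk.restAt rest
      | none => 0
  decreasing_by
    simp only [List.getElem?_eq_some_iff] at h
    obtain ⟨hk, rfl⟩ := h
    simpa using Nat.lt_succ_of_le (List.sizeOf_le_of_mem (List.getElem_mem hk))

/-- `isVertex T w`: the address `w` denotes an actual vertex of `T`. -/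
def RTree.isVertex : RTree → List ℕ → Prop
  | _, [] => True
  | .node ts, k :: rest =>
      match h : ts[k]? with
      | some tk => tk.isVertex rest
      | none => False
  decreasing_by
    simp only [List.getElem?_eq_some_iff] at h
    obtain ⟨hk, rfl⟩ := h
    simpa using Nat.lt_succ_of_le (List.sizeOf_le_of_mem (List.getElem_mem hk))

/-!
Every child period divides `R(S)`, so once `R(Sᵢ) ≤ P(Sᵢ)` each summand `(R(S)/P(Sᵢ))·R(Sᵢ)`
is at most `R(S)`; induction thus gives `0 < R(S)` and `2·R(S) ≤ P(S)`. Hence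
`(R(S)/P(Sₖ))·R(Sₖ) < R(S)`, which is the inequality along an edge at the root; along a deeper
edge both values carry the same positive factors `R/P` picked up on the path from the root.
-/

theorem Nat.div_mul_le_of_le {a b c : ℕ} (hcb : c ≤ b) : a / b * c ≤ a :=
  (Nat.mul_le_mul_left _ hcb).trans (Nat.div_mul_le_self a b)

theorem Nat.div_mul_lt_of_dvd {a b c : ℕ} (hba : b ∣ a) (ha : 0 < a) (hcb : c < b) :
    a / b * c < a :=
  calc a / b * c < a / b * b :=
        Nat.mul_lt_mul_of_pos_left hcb (Nat.div_pos (Nat.le_of_dvd ha hba) (by omega))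
    _ = a := Nat.div_mul_cancel hba

namespace RTree

@[elab_as_elim]
theorem mem_induction {motive : RTree → Prop}
    (node : ∀ ts, (∀ t ∈ ts, motive t) → motive (.node ts)) : ∀ t, motive t
  | .node ts => node ts fun t _ => mem_induction node t
decreasing_by
  have := List.sizeOf_lt_of_mem ‹t ∈ ts›
  simp only [RTree.node.sizeOf_spec]
  omega

theorem R_leaf : (node []).R = 1 := by simp [R, RP]

theorem P_leaf : (node []).P = 2 := by simp [P, RP]

theorem R_node {ts : List RTree} (hts : ts ≠ []) :
    (node ts).R = (ts.map P).foldr Nat.lcm 1 := by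
  obtain ⟨t, ts, rfl⟩ := List.exists_cons_of_ne_nil hts
  simp only [R, RP, List.map_map, Function.comp_def, List.map_subtype, List.unattach_attach]
  rfl

theorem P_node {ts : List RTree} (hts : ts ≠ []) :
    (node ts).P = (ts.length + 2) * (node ts).R
      - (ts.map fun t => (node ts).R / t.P * t.R).sum := by
  obtain ⟨t, ts, rfl⟩ := List.exists_cons_of_ne_nil hts
  simp only [R, RP, P, List.map_map, Function.comp_def, List.map_subtype, List.unattach_attach]

theorem P_dvd_R_of_mem {ts : List RTree} {t : RTree} (ht : t ∈ ts) : t.P ∣ (node ts).R := by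
  rw [R_node (List.ne_nil_of_mem ht)]
  -- `Multiset.lcm` of a list of naturals unfolds to its `foldr Nat.lcm 1`
  exact Multiset.dvd_lcm (s := (ts.map P : Multiset ℕ)) (List.mem_map_of_mem ht)

theorem R_pos_and_two_mul_R_le_P (t : RTree) : 0 < t.R ∧ 2 * t.R ≤ t.P := by
  induction t using mem_induction with
  | node ts ih =>
    rcases eq_or_ne ts [] with rfl | hts
    · simp [R_leaf, P_leaf]
    have hr : 0 < (node ts).R := by
      refine Nat.pos_of_ne_zero fun hr0 => ?_
      rw [R_node hts] at hr0
      obtain ⟨t, ht, hP⟩ := List.mem_map.1 ((Multiset.lcm_eq_zero_iff (ts.map P : Multiset ℕ)).1 hr0)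
      have := ih t ht
      omega
    have hsum : (ts.map fun t => (node ts).R / t.P * t.R).sum ≤ ts.length * (node ts).R := by
      refine (List.sum_le_card_nsmul _ _ ?_).trans_eq (by rw [List.length_map, smul_eq_mul])
      simp only [List.mem_map]
      rintro _ ⟨t, ht, rfl⟩
      exact Nat.div_mul_le_of_le (by have := ih t ht; omega)
    have : (ts.length + 2) * (node ts).R = ts.length * (node ts).R + 2 * (node ts).R := by ring
    rw [P_node hts]
    omega

theorem R_pos (t : RTree) : 0 < t.R := t.R_pos_and_two_mul_R_le_P.1

theorem R_lt_P (t : RTree) : t.R < t.P := by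
  have := t.R_pos_and_two_mul_R_le_P
  omega

theorem R_div_P_pos_of_mem {ts : List RTree} {t : RTree} (ht : t ∈ ts) : 0 < (node ts).R / t.P :=
  Nat.div_pos (Nat.le_of_dvd (R_pos _) (P_dvd_R_of_mem ht)) ((R_pos t).trans (R_lt_P t))

theorem restAt_nil (t : RTree) : t.restAt [] = t.R := by
  rw [restAt]

theorem restAt_cons_of_getElem?_eq_some {ts : List RTree} {k : ℕ} {tk : RTree}
    (h : ts[k]? = some tk) (w : List ℕ) :
    (node ts).restAt (k :: w) = (node ts).R / tk.P * tk.restAt w := by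
  rw [restAt]
  split <;> simp_all

theorem restAt_cons_of_getElem?_eq_none {ts : List RTree} {k : ℕ} (h : ts[k]? = none)
    (w : List ℕ) : (node ts).restAt (k :: w) = 0 := by
  rw [restAt]
  split <;> simp_all

theorem isVertex_cons_of_getElem?_eq_some {ts : List RTree} {k : ℕ} {tk : RTree}
    (h : ts[k]? = some tk) (w : List ℕ) : (node ts).isVertex (k :: w) ↔ tk.isVertex w := by
  rw [isVertex]
  split <;> simp_all

theorem not_isVertex_cons_of_getElem?_eq_none {ts : List RTree} {k : ℕ} (h : ts[k]? = none)
    (w : List ℕ) : ¬(node ts).isVertex (k :: w) := by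
  rw [isVertex]
  split <;> simp_all

theorem restAt_le_R : ∀ (t : RTree) (w : List ℕ), t.restAt w ≤ t.R
  | t, [] => (restAt_nil t).le
  | .node ts, k :: w => by
    cases h : ts[k]? with
    | none => simp [restAt_cons_of_getElem?_eq_none h]
    | some tk =>
      rw [restAt_cons_of_getElem?_eq_some h]
      exact Nat.div_mul_le_of_le ((restAt_le_R tk w).trans (R_lt_P tk).le)

theorem restAt_cons_lt_R : ∀ (t : RTree) (k : ℕ) (w : List ℕ), t.restAt (k :: w) < t.R
  | .node ts, k, w => by
    cases h : ts[k]? with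
    | none => simpa [restAt_cons_of_getElem?_eq_none h] using R_pos _
    | some tk =>
      rw [restAt_cons_of_getElem?_eq_some h]
      calc (node ts).R / tk.P * tk.restAt w ≤ (node ts).R / tk.P * tk.R :=
            Nat.mul_le_mul_left _ (restAt_le_R tk w)
        _ < (node ts).R :=
            Nat.div_mul_lt_of_dvd (P_dvd_R_of_mem (List.mem_of_getElem? h)) (R_pos _) (R_lt_P tk)

theorem restAt_append_singleton_lt :
    ∀ (t : RTree) (u : List ℕ) (k : ℕ), t.isVertex (u ++ [k]) → t.restAt (u ++ [k]) < t.restAt u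
  | t, [], k, _ => by
    rw [List.nil_append, restAt_nil]
    exact restAt_cons_lt_R t k []
  | .node ts, j :: u, k, hv => by
    cases h : ts[j]? with
    | none => exact absurd hv (not_isVertex_cons_of_getElem?_eq_none h _)
    | some tj =>
      rw [List.cons_append, isVertex_cons_of_getElem?_eq_some h] at hv
      rw [List.cons_append, restAt_cons_of_getElem?_eq_some h, restAt_cons_of_getElem?_eq_some h]
      exact Nat.mul_lt_mul_of_pos_left (restAt_append_singleton_lt tj u k hv)
        (R_div_P_pos_of_mem (List.mem_of_getElem? h))

end RTree

/-- The restoration value strictly decreases along edges away from the root: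
if `w` is a child vertex of `u`, then `R_T(w) < R_T(u)`; consequently the root
has the strictly largest restoration value. -/
theorem restoration_strict_decreasing (T : RTree) :
    (∀ (u : List ℕ) (k : ℕ), T.isVertex (u ++ [k]) →
        T.restAt (u ++ [k]) < T.restAt u)
      ∧ ∀ w : List ℕ, w ≠ [] → T.isVertex w → T.restAt w < T.restAt [] := by
  refine ⟨T.restAt_append_singleton_lt, fun w hw _ => ?_⟩
  obtain ⟨k, w, rfl⟩ := List.exists_cons_of_ne_nil hw
  rw [RTree.restAt_nil]
  exact T.restAt_cons_lt_R k w
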